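/- arXiv:1412.5438 — 4 statements merged into one kernel-verified Lean document; each statement's English description precedes it below -/
import Mathlib

section
/- There exist a metric measure space Ω = [0,1] with Lebesgue measure, a constant 0 < R < 1/2, and a nonnegative kernel J with J(x,y) > 0 for all (x,y) ∈ [0,1]² \ (1/2−R, 1/2+R)² with d(x,y) < R, and a nonnegative nontrivial z₀ with essential support contained in [1/2, 1], such that the essential support of K_J^n(z₀) remains contained in [1/2, 1] for all n ∈ ℕ. Hence the positivity condition J(x,y) > 0 whenever d(x,y) < R cannot be weakened to hold only outside a square neighborhood of the diagonal point (1/2,1/2). -/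
open MeasureTheory Set

def essSupportOfR (μ : Measure ℝ) (z : ℝ → ℝ) : Set ℝ :=
  {x | ∀ δ > (0 : ℝ), 0 < μ ({y | 0 < z y} ∩ Metric.ball x δ)}

noncomputable def KJopR (μ : Measure ℝ) (J : ℝ → ℝ → ℝ) (u : ℝ → ℝ) : ℝ → ℝ :=
  fun x => ∫ y, J x y * u y ∂μ

lemma aux_supp (u : ℝ → ℝ) (h : ∀ x < (1/2:ℝ), u x = 0) :
    essSupportOfR (volume.restrict (Icc (0 : ℝ) 1)) u ⊆ Icc (1 / 2 : ℝ) 1 := by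
  intro x hx
  constructor
  · by_contra h1
    push_neg at h1
    have := hx ((1:ℝ)/2 - x) (by linarith)
    have hemp : {y | 0 < u y} ∩ Metric.ball x (1/2 - x) = ∅ := by
      ext y
      simp only [mem_inter_iff, mem_setOf_eq, Metric.mem_ball, mem_empty_iff_false, iff_false]
      rintro ⟨hy, hb⟩
      rw [Real.dist_eq, abs_lt] at hb
      have : u y = 0 := h y (by linarith [hb.2])
      linarith
    rw [hemp] at this
    simp at this
  · by_contra h1
    push_neg at h1
    have := hx (x - 1) (by linarith)
    have hnull : (volume.restrict (Icc (0 : ℝ) 1))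
        ({y | 0 < u y} ∩ Metric.ball x (x - 1)) = 0 := by
      rw [Measure.restrict_apply' measurableSet_Icc]
      refine measure_mono_null ?_ (measure_empty)
      intro y hy
      rcases hy with ⟨⟨_, hb⟩, hI⟩
      rw [Metric.mem_ball, Real.dist_eq, abs_lt] at hb
      have : y ≤ 1 := hI.2
      simp only [mem_empty_iff_false]
      linarith [hb.1]
    rw [hnull] at this
    simp at this

/-- Optimality of the positivity condition: on `Ω = [0,1]` with Lebesgue measure there
are `0 < R < 1/2`, a nonnegative kernel `J` with `J(x,y) > 0` for all
`(x,y) ∈ [0,1]² \ (1/2-R, 1/2+R)²` with `|x-y| < R`, and a nonnegative nontrivial `z₀`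
with essential support in `[1/2,1]`, such that the essential support of `K_J^n z₀`
stays inside `[1/2,1]` for every `n`. -/
theorem stmt9 :
    ∃ (R : ℝ), 0 < R ∧ R < 1 / 2 ∧
      ∃ (J : ℝ → ℝ → ℝ) (z₀ : ℝ → ℝ),
        Measurable (Function.uncurry J) ∧ (∀ x y, 0 ≤ J x y) ∧
        (∀ x ∈ Icc (0 : ℝ) 1, ∀ y ∈ Icc (0 : ℝ) 1,
          ¬(x ∈ Ioo (1 / 2 - R) (1 / 2 + R) ∧ y ∈ Ioo (1 / 2 - R) (1 / 2 + R)) →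
          dist x y < R → 0 < J x y) ∧
        Measurable z₀ ∧ (∀ x, 0 ≤ z₀ x) ∧
        0 < (volume.restrict (Icc (0 : ℝ) 1)) {y | 0 < z₀ y} ∧
        essSupportOfR (volume.restrict (Icc (0 : ℝ) 1)) z₀ ⊆ Icc (1 / 2 : ℝ) 1 ∧
        ∀ n : ℕ,
          essSupportOfR (volume.restrict (Icc (0 : ℝ) 1))
              ((KJopR (volume.restrict (Icc (0 : ℝ) 1)) J)^[n] z₀) ⊆
            Icc (1 / 2 : ℝ) 1 := by
  refine ⟨1/4, by norm_num, by norm_num,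
    fun x y => if (x < 1/2 ↔ y < 1/2) then 1 else 0,
    fun y => if 1/2 ≤ y then 1 else 0, ?_, ?_, ?_, ?_, ?_, ?_, ?_, ?_⟩
  · -- measurability of uncurry J
    have h1 : MeasurableSet {p : ℝ × ℝ | p.1 < 1/2} :=
      measurableSet_lt measurable_fst measurable_const
    have h2 : MeasurableSet {p : ℝ × ℝ | p.2 < 1/2} :=
      measurableSet_lt measurable_snd measurable_const
    have hs : MeasurableSet {p : ℝ × ℝ | p.1 < 1/2 ↔ p.2 < 1/2} := by
      have : {p : ℝ × ℝ | p.1 < 1/2 ↔ p.2 < 1/2}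
          = ({p : ℝ × ℝ | p.1 < 1/2} ∩ {p | p.2 < 1/2}) ∪
            ({p : ℝ × ℝ | p.1 < 1/2}ᶜ ∩ {p | p.2 < 1/2}ᶜ) := by
        ext p
        simp only [mem_setOf_eq, mem_union, mem_inter_iff, mem_compl_iff]
        tauto
      rw [this]
      exact (h1.inter h2).union (h1.compl.inter h2.compl)
    exact Measurable.ite hs measurable_const measurable_const
  · intro x y; dsimp only; split_ifs <;> norm_num
  · -- positivity
    intro x hx y hy hsq hd
    dsimp only
    rw [Real.dist_eq, abs_lt] at hd
    split_ifs with h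
    · norm_num
    · exfalso
      push_neg at hsq
      by_cases hx2 : x < 1/2 <;> by_cases hy2 : y < 1/2
      · exact h ⟨fun _ => hy2, fun _ => hx2⟩
      · push_neg at hy2
        have hmem : x ∈ Ioo ((1:ℝ)/2 - 1/4) (1/2 + 1/4) :=
          ⟨by linarith [hd.1], by linarith⟩
        have := hsq hmem
        rw [mem_Ioo] at this
        push_neg at this
        rcases lt_or_ge y (1/2 + 1/4) with hlt | hge
        · linarith [this (by linarith [hd.1])]
        · linarith [hd.1]
      · push_neg at hx2
        have hmem : x ∈ Ioo ((1:ℝ)/2 - 1/4) (1/2 + 1/4) :=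
          ⟨by linarith, by linarith [hd.2]⟩
        have := hsq hmem
        rw [mem_Ioo] at this
        push_neg at this
        rcases lt_or_ge y (1/2 + 1/4) with hlt | hge
        · linarith [this (by linarith [hd.2])]
        · linarith [hd.2]
      · exact h ⟨fun hx' => absurd hx' hx2, fun hy' => absurd hy' hy2⟩
  · exact Measurable.ite (measurableSet_le measurable_const measurable_id) measurable_const
      measurable_const
  · intro x; dsimp only; split_ifs <;> norm_num
  · -- nontriviality
    have hset : {y | 0 < (if (1:ℝ)/2 ≤ y then (1:ℝ) else 0)} = Ici ((1:ℝ)/2) := by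
      ext y
      simp only [mem_setOf_eq, mem_Ici]
      by_cases h : (1:ℝ)/2 ≤ y
      · rw [if_pos h]; simpa using h
      · rw [if_neg h]; simpa using h
    rw [hset, Measure.restrict_apply' measurableSet_Icc]
    have : Ici ((1:ℝ)/2) ∩ Icc (0:ℝ) 1 = Icc (1/2) 1 := by
      ext y; simp only [mem_inter_iff, mem_Ici, mem_Icc]; constructor
      · rintro ⟨h1, _, h2⟩; exact ⟨h1, h2⟩
      · rintro ⟨h1, h2⟩; exact ⟨h1, by linarith, h2⟩
    rw [this, Real.volume_Icc]
    norm_num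
  · exact aux_supp _ (fun x hx => if_neg (by linarith))
  · intro n
    refine aux_supp _ ?_
    induction n with
    | zero =>
      intro x hx
      simp only [Function.iterate_zero, id_eq]
      exact if_neg (by linarith)
    | succ n ih =>
      intro x hx
      rw [Function.iterate_succ_apply']
      show ∫ y, _ ∂_ = 0
      have hzero : (fun y => (if (x < (1:ℝ)/2 ↔ y < 1/2) then (1:ℝ) else 0) *
          (KJopR (volume.restrict (Icc (0 : ℝ) 1))
            (fun x y => if (x < 1/2 ↔ y < 1/2) then 1 else 0))^[n]
            (fun y => if 1/2 ≤ y then 1 else 0) y) = fun _ => 0 := by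
        funext y
        by_cases hy : y < (1:ℝ)/2
        · rw [ih y hy, mul_zero]
        · rw [if_neg (by tauto), zero_mul]
      show (∫ y, (if (x < (1:ℝ)/2 ↔ y < 1/2) then (1:ℝ) else 0) * _ ∂_) = 0
      rw [hzero, integral_zero]
end

section
/- Let μ(Ω) < ∞ and suppose K : L^{p₀}(Ω) → L^{p₁}(Ω) is compact for some 1 ≤ p₀ < p₁ ≤ ∞. Then K defines a compact operator on L^p(Ω) for all p ∈ [p₀, p₁], and the spectrum σ_{L^p}(K) is independent of p ∈ [p₀, p₁]. -/
open MeasureTheory ENNReal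

section Swap

variable {X Y : Type*} [NormedAddCommGroup X] [NormedSpace ℝ X]
  [NormedAddCommGroup Y] [NormedSpace ℝ Y]

/-- If `l ≠ 0` and `l - BA` is invertible, then `l - AB` is invertible. -/
lemma aux_isUnit_swap (A : X →L[ℝ] Y) (B : Y →L[ℝ] X) {l : ℝ} (hl : l ≠ 0)
    (h : IsUnit (algebraMap ℝ (X →L[ℝ] X) l - B.comp A)) :
    IsUnit (algebraMap ℝ (Y →L[ℝ] Y) l - A.comp B) := by
  obtain ⟨u, hu⟩ := h
  set C : X →L[ℝ] X := ↑u⁻¹ with hC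
  have h1 : ∀ x : X, l • C x - B (A (C x)) = x := by
    intro x
    have := congrArg (fun T : X →L[ℝ] X => T x) u.mul_inv
    simpa [hu, hC, Algebra.algebraMap_eq_smul_one, ContinuousLinearMap.mul_apply] using this
  have h2 : ∀ x : X, C (l • x - B (A x)) = x := by
    intro x
    have := congrArg (fun T : X →L[ℝ] X => T x) u.inv_mul
    simpa [hu, hC, Algebra.algebraMap_eq_smul_one, ContinuousLinearMap.mul_apply] using this
  rw [Algebra.algebraMap_eq_smul_one]
  refine ⟨⟨l • 1 - A.comp B, l⁻¹ • (1 + A.comp (C.comp B)), ?_, ?_⟩, rfl⟩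
  · ext y
    simp only [ContinuousLinearMap.mul_apply, ContinuousLinearMap.sub_apply,
      ContinuousLinearMap.smul_apply, ContinuousLinearMap.one_apply,
      ContinuousLinearMap.add_apply, ContinuousLinearMap.coe_comp', Function.comp_apply]
    have hb : B (A (C (B y))) = l • C (B y) - B y := by
      have ha := sub_eq_iff_eq_add.mp (h1 (B y))
      rw [ha]; abel
    simp only [_root_.map_smul, map_add]
    rw [hb]
    simp only [map_sub, _root_.map_smul]
    match_scalars <;> field_simp <;> ring
  · ext y
    simp only [ContinuousLinearMap.mul_apply, ContinuousLinearMap.sub_apply,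
      ContinuousLinearMap.smul_apply, ContinuousLinearMap.one_apply,
      ContinuousLinearMap.add_apply, ContinuousLinearMap.coe_comp', Function.comp_apply]
    have hz : C (B (l • y - A (B y))) = B y := by
      rw [map_sub, _root_.map_smul]; exact h2 (B y)
    rw [hz]
    match_scalars <;> field_simp <;> ring

lemma aux_finiteDimensional_of_id_compact [CompleteSpace X]
    (h : IsCompactOperator (id : X → X)) : FiniteDimensional ℝ X := by
  obtain ⟨K, hK, hKmem⟩ := h
  rw [Set.preimage_id] at hKmem
  obtain ⟨r, hr, hball⟩ := Metric.mem_nhds_iff.mp hKmem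
  have hsub : Metric.closedBall (0 : X) (r / 2) ⊆ K :=
    (Metric.closedBall_subset_ball (by linarith)).trans hball
  have : IsCompact (Metric.closedBall (0 : X) (r / 2)) :=
    hK.of_isClosed_subset Metric.isClosed_closedBall hsub
  exact FiniteDimensional.of_isCompact_closedBall ℝ (by linarith) this

/-- Spectrum swap for compositions, in the presence of compactness and an injective
dense-range factor. -/
lemma aux_spectrum_comp [CompleteSpace X] [CompleteSpace Y]
    (A : X →L[ℝ] Y) (B : Y →L[ℝ] X)
    (hBA : IsCompactOperator (B.comp A)) (hAinj : Function.Injective A)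
    (hAdense : DenseRange A) :
    spectrum ℝ (A.comp B) = spectrum ℝ (B.comp A) := by
  ext l
  rw [spectrum.mem_iff, spectrum.mem_iff]
  by_cases hl : l = 0
  · subst hl
    simp only [map_zero, zero_sub, IsUnit.neg_iff]
    rw [ContinuousLinearMap.isUnit_iff_bijective, ContinuousLinearMap.isUnit_iff_bijective]
    refine not_congr ?_
    have key : Function.Bijective A → (Function.Bijective (A.comp B) ↔
        Function.Bijective (B.comp A)) := by
      intro hA
      simp only [ContinuousLinearMap.coe_comp']
      constructor
      · intro hAB
        have hBinj : Function.Injective B := Function.Injective.of_comp hAB.1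
        have hBsurj : Function.Surjective B := by
          intro x
          obtain ⟨y, hy⟩ := hAB.2 (A x)
          exact ⟨y, hA.1 hy⟩
        exact ⟨hBinj.comp hA.1, hBsurj.comp hA.2⟩
      · intro hBA'
        have hBsurj : Function.Surjective B := Function.Surjective.of_comp hBA'.2
        have hBinj : Function.Injective B := by
          intro y₁ y₂ hy
          obtain ⟨x₁, rfl⟩ := hA.2 y₁
          obtain ⟨x₂, rfl⟩ := hA.2 y₂
          exact congrArg A (hBA'.1 hy)
        exact ⟨hA.1.comp hBinj, hA.2.comp hBsurj⟩
    constructor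
    · intro hAB
      have hAsurj : Function.Surjective A := by
        have := hAB.2
        rw [ContinuousLinearMap.coe_comp'] at this
        exact Function.Surjective.of_comp this
      exact (key ⟨hAinj, hAsurj⟩).mp hAB
    · intro hBA'
      -- B.comp A invertible and compact ⇒ X finite-dimensional ⇒ A surjective
      have hid : IsCompactOperator (id : X → X) := by
        obtain ⟨u, hu⟩ := ContinuousLinearMap.isUnit_iff_bijective.mpr hBA'
        have hcomp : IsCompactOperator (⇑(↑u⁻¹ : X →L[ℝ] X) ∘ ⇑(B.comp A)) :=
          hBA.continuous_comp (↑u⁻¹ : X →L[ℝ] X).continuous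
        have heq : (⇑(↑u⁻¹ : X →L[ℝ] X) ∘ ⇑(B.comp A)) = (id : X → X) := by
          funext x
          have := congrArg (fun T : X →L[ℝ] X => T x) u.inv_mul
          simpa [hu, ContinuousLinearMap.mul_apply] using this
        rwa [heq] at hcomp
      haveI : FiniteDimensional ℝ X := aux_finiteDimensional_of_id_compact hid
      have hAsurj : Function.Surjective A := by
        have hclosed : IsClosed ((LinearMap.range (A : X →ₗ[ℝ] Y) : Submodule ℝ Y) : Set Y) :=
          Submodule.closed_of_finiteDimensional _
        have hdense : Dense ((LinearMap.range (A : X →ₗ[ℝ] Y) : Submodule ℝ Y) : Set Y) := by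
          have hr : ((LinearMap.range (A : X →ₗ[ℝ] Y) : Submodule ℝ Y) : Set Y) = Set.range ⇑A := by
            ext y; simp [LinearMap.mem_range]
          rw [hr]; exact hAdense
        have huniv : ((LinearMap.range (A : X →ₗ[ℝ] Y) : Submodule ℝ Y) : Set Y) = Set.univ := by
          rw [← hclosed.closure_eq]
          exact hdense.closure_eq
        intro y
        have hy : y ∈ (LinearMap.range (A : X →ₗ[ℝ] Y) : Submodule ℝ Y) := by
          rw [← SetLike.mem_coe, huniv]; trivial
        exact hy
      exact (key ⟨hAinj, hAsurj⟩).mpr hBA'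
  · exact not_congr ⟨fun h => aux_isUnit_swap B A hl h, fun h => aux_isUnit_swap A B hl h⟩

end Swap

section Incl

variable {Ω : Type*} [MeasurableSpace Ω] (μ : Measure Ω) [IsFiniteMeasure μ]

/-- The inclusion `L^p(μ) → L^q(μ)` for `q ≤ p` on a finite measure space. -/
noncomputable def lpIncl (q p : ℝ≥0∞) [Fact (1 ≤ q)] [Fact (1 ≤ p)] (hqp : q ≤ p) :
    Lp ℝ p μ →L[ℝ] Lp ℝ q μ := by
  refine LinearMap.mkContinuous
    { toFun := fun u => ((Lp.memLp u).mono_exponent hqp).toLp u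
      map_add' := fun u v =>
        (MemLp.toLp_congr _ _ (Lp.coeFn_add u v)).trans (MemLp.toLp_add _ _)
      map_smul' := fun c u => by
        simp only [RingHom.id_apply]
        rw [MemLp.toLp_congr ((Lp.memLp (c • u)).mono_exponent hqp)
          (((Lp.memLp u).mono_exponent hqp).const_smul c) (Lp.coeFn_smul c u)]
        exact MemLp.toLp_const_smul c _ }
    (μ Set.univ ^ (1 / q.toReal - 1 / p.toReal)).toReal ?_
  · intro u
    have he : (0 : ℝ) ≤ 1 / q.toReal - 1 / p.toReal := by
      by_cases hp : p = ∞
      · rw [hp]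
        simp only [ENNReal.toReal_top]
        rw [_root_.div_zero, sub_zero]
        exact div_nonneg zero_le_one ENNReal.toReal_nonneg
      · have hq : q ≠ ∞ := fun h => hp (top_le_iff.mp (h ▸ hqp))
        have hq0 : 0 < q.toReal :=
          ENNReal.toReal_pos (lt_of_lt_of_le zero_lt_one (Fact.out : 1 ≤ q)).ne' hq
        have : q.toReal ≤ p.toReal := ENNReal.toReal_mono hp hqp
        have := one_div_le_one_div_of_le hq0 this
        linarith
    have hm : μ Set.univ ^ (1 / q.toReal - 1 / p.toReal) ≠ ∞ :=
      (ENNReal.rpow_lt_top_of_nonneg he (measure_ne_top μ _)).ne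
    have hle : eLpNorm (⇑u) q μ ≤ eLpNorm (⇑u) p μ * μ Set.univ ^ (1 / q.toReal - 1 / p.toReal) :=
      eLpNorm_le_eLpNorm_mul_rpow_measure_univ hqp (Lp.aestronglyMeasurable u)
    have hfin : eLpNorm (⇑u) p μ * μ Set.univ ^ (1 / q.toReal - 1 / p.toReal) ≠ ∞ :=
      ENNReal.mul_ne_top (Lp.eLpNorm_ne_top u) hm
    calc ‖((Lp.memLp u).mono_exponent hqp).toLp u‖
        = (eLpNorm (⇑u) q μ).toReal := Lp.norm_toLp _ ((Lp.memLp u).mono_exponent hqp)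
      _ ≤ (eLpNorm (⇑u) p μ * μ Set.univ ^ (1 / q.toReal - 1 / p.toReal)).toReal :=
          ENNReal.toReal_mono hfin hle
      _ = (μ Set.univ ^ (1 / q.toReal - 1 / p.toReal)).toReal * ‖u‖ := by
          rw [ENNReal.toReal_mul, Lp.norm_def, mul_comm]

lemma lpIncl_coeFn (q p : ℝ≥0∞) [Fact (1 ≤ q)] [Fact (1 ≤ p)] (hqp : q ≤ p) (u : Lp ℝ p μ) :
    ⇑(lpIncl μ q p hqp u) =ᵐ[μ] ⇑u :=
  MemLp.coeFn_toLp ((Lp.memLp u).mono_exponent hqp)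

lemma lpIncl_injective (q p : ℝ≥0∞) [Fact (1 ≤ q)] [Fact (1 ≤ p)] (hqp : q ≤ p) :
    Function.Injective ⇑(lpIncl μ q p hqp) := by
  intro u v h
  apply Lp.ext
  have h1 := lpIncl_coeFn μ q p hqp u
  have h2 := lpIncl_coeFn μ q p hqp v
  rw [h] at h1
  exact h1.symm.trans h2

lemma lpIncl_denseRange (q p : ℝ≥0∞) [Fact (1 ≤ q)] [Fact (1 ≤ p)] (hq : q ≠ ∞) (hqp : q ≤ p) :
    DenseRange ⇑(lpIncl μ q p hqp) := by
  have hd : Dense (Set.range ((↑) : Lp.simpleFunc ℝ q μ → Lp ℝ q μ)) :=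
    Lp.simpleFunc.denseRange hq
  refine Dense.mono ?_ hd
  rintro _ ⟨s, rfl⟩
  set g := Lp.simpleFunc.toSimpleFunc s with hg
  have hgs : ⇑g =ᵐ[μ] ⇑(s : Lp ℝ q μ) := Lp.simpleFunc.toSimpleFunc_eq_toFun s
  have hm : MemLp (⇑g) p μ := g.memLp_of_isFiniteMeasure p μ
  refine ⟨hm.toLp g, ?_⟩
  apply Lp.ext
  calc ⇑(lpIncl μ q p hqp (hm.toLp ⇑g)) =ᵐ[μ] ⇑(hm.toLp ⇑g) := lpIncl_coeFn μ q p hqp _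
    _ =ᵐ[μ] ⇑g := hm.coeFn_toLp
    _ =ᵐ[μ] ⇑(s : Lp ℝ q μ) := hgs

end Incl

/-- If `μ(Ω) < ∞` and `K : L^{p₀}(Ω) → L^{p₁}(Ω)` is compact for some
`1 ≤ p₀ < p₁ ≤ ∞`, then `K` induces a compact operator on `L^p(Ω)` for every
`p ∈ [p₀, p₁]`, and the spectrum `σ_{L^p}(K)` is independent of `p`. -/
theorem stmt11 {Ω : Type*} [MeasurableSpace Ω] (μ : Measure Ω) [IsFiniteMeasure μ]
    (p₀ p₁ : ℝ≥0∞) [Fact (1 ≤ p₀)] [Fact (1 ≤ p₁)] (h01 : p₀ < p₁)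
    (K : Lp ℝ p₀ μ →L[ℝ] Lp ℝ p₁ μ) (hK : IsCompactOperator K) :
    ∃ σ₀ : Set ℝ, ∀ (p : ℝ≥0∞) [Fact (1 ≤ p)], p₀ ≤ p → p ≤ p₁ →
      ∃ T : Lp ℝ p μ →L[ℝ] Lp ℝ p μ,
        (∀ (u : Lp ℝ p μ) (u₀ : Lp ℝ p₀ μ),
          (u : Ω → ℝ) =ᵐ[μ] u₀ → (T u : Ω → ℝ) =ᵐ[μ] K u₀) ∧
        IsCompactOperator T ∧ spectrum ℝ T = σ₀ := by
  have hp₀top : p₀ ≠ ∞ := (h01.trans_le le_top).ne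
  refine ⟨spectrum ℝ ((lpIncl μ p₀ p₁ h01.le).comp K), ?_⟩
  intro p _ hp₀p hpp₁
  set A : Lp ℝ p μ →L[ℝ] Lp ℝ p₀ μ := lpIncl μ p₀ p hp₀p with hA
  set B : Lp ℝ p₀ μ →L[ℝ] Lp ℝ p μ := (lpIncl μ p p₁ hpp₁).comp K with hB
  have hTcompact : IsCompactOperator ⇑(B.comp A) := by
    have h1 : IsCompactOperator (⇑K ∘ ⇑A) := hK.comp_clm A
    have h2 : IsCompactOperator (⇑(lpIncl μ p p₁ hpp₁) ∘ (⇑K ∘ ⇑A)) :=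
      h1.continuous_comp (lpIncl μ p p₁ hpp₁).continuous
    have : ⇑(B.comp A) = ⇑(lpIncl μ p p₁ hpp₁) ∘ (⇑K ∘ ⇑A) := by
      funext x; simp [hB]
    rwa [this]
  refine ⟨B.comp A, ?_, hTcompact, ?_⟩
  · intro u u₀ hu
    have hAu : A u = u₀ := Lp.ext ((lpIncl_coeFn μ p₀ p hp₀p u).trans hu)
    have : (B.comp A) u = lpIncl μ p p₁ hpp₁ (K u₀) := by
      simp [hB, hAu]
    rw [this]
    exact lpIncl_coeFn μ p p₁ hpp₁ (K u₀)
  · have hcompAB : A.comp B = (lpIncl μ p₀ p₁ h01.le).comp K := by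
      ext u
      show ⇑((A.comp B) u) =ᵐ[μ] ⇑(((lpIncl μ p₀ p₁ h01.le).comp K) u)
      simp only [ContinuousLinearMap.coe_comp', Function.comp_apply]
      calc ⇑(A (B u)) =ᵐ[μ] ⇑(B u) := lpIncl_coeFn μ p₀ p hp₀p _
        _ =ᵐ[μ] ⇑(K u) := lpIncl_coeFn μ p p₁ hpp₁ _
        _ =ᵐ[μ] ⇑((lpIncl μ p₀ p₁ h01.le) (K u)) := (lpIncl_coeFn μ p₀ p₁ h01.le _).symm
    rw [← aux_spectrum_comp A B hTcompact (lpIncl_injective μ p₀ p hp₀p)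
      (lpIncl_denseRange μ p₀ p hp₀top hp₀p), hcompAB]
end

section
/- (Weak maximum principle) Let X = L^p(Ω) or C_b(Ω), let J ≥ 0 with K_J ∈ L(X,X), and h ∈ L^∞(Ω) (resp. C_b(Ω)). For every nonnegative u₀ ∈ X, the solution u(t) = e^{(K_J − hI)t} u₀ of u_t = K_J u − h u, u(0) = u₀, satisfies u(t) ≥ 0 for all t ≥ 0. -/
open MeasureTheory ENNReal Filter

set_option maxHeartbeats 1000000
set_option synthInstance.maxHeartbeats 400000

/-- Weak maximum principle: if `J ≥ 0`, `K = K_J` is bounded on `X = L^p(Ω)` and `hI`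
is multiplication by a bounded `h`, then for every nonnegative `u₀ ∈ X` the solution
`u(t) = e^{(K_J − hI)t} u₀` of `u_t = K_J u − h u` is nonnegative for all `t ≥ 0`. -/
theorem stmt16 {Ω : Type*} [MeasurableSpace Ω] (μ : Measure Ω) [SigmaFinite μ]
    (p : ℝ≥0∞) [Fact (1 ≤ p)]
    (J : Ω → Ω → ℝ) (hJmeas : Measurable (Function.uncurry J)) (hJnn : ∀ x y, 0 ≤ J x y)
    (K : Lp ℝ p μ →L[ℝ] Lp ℝ p μ)
    (hK : ∀ u : Lp ℝ p μ, (K u : Ω → ℝ) =ᵐ[μ] fun x => ∫ y, J x y * u y ∂μ)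
    (h : Ω → ℝ) (hmeas : Measurable h) (hbdd : ∃ C : ℝ, ∀ x, |h x| ≤ C)
    (M : Lp ℝ p μ →L[ℝ] Lp ℝ p μ)
    (hM : ∀ u : Lp ℝ p μ, (M u : Ω → ℝ) =ᵐ[μ] fun x => h x * u x) :
    ∀ u₀ : Lp ℝ p μ, (0 : Ω → ℝ) ≤ᵐ[μ] u₀ → ∀ t : ℝ, 0 ≤ t →
      (0 : Ω → ℝ) ≤ᵐ[μ] (NormedSpace.exp (t • (K - M)) u₀ : Ω → ℝ) := by
  obtain ⟨C, hC⟩ := hbdd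
  intro u₀ hu₀ t ht
  set A : Lp ℝ p μ →L[ℝ] Lp ℝ p μ := K - M + C • 1 with hA
  -- A preserves a.e.-nonnegativity
  have hApos : ∀ u : Lp ℝ p μ, (0 : Ω → ℝ) ≤ᵐ[μ] u → (0 : Ω → ℝ) ≤ᵐ[μ] A u := by
    intro u hu
    have hAu : A u = K u - M u + C • u := by
      simp [hA, ContinuousLinearMap.add_apply, ContinuousLinearMap.sub_apply]
    rw [hAu]
    filter_upwards [Lp.coeFn_add (K u - M u) (C • u), Lp.coeFn_sub (K u) (M u),
      Lp.coeFn_smul C u, hK u, hM u, hu] with x e1 e2 e3 e4 e5 hux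
    have hKnn : 0 ≤ ∫ y, J x y * u y ∂μ :=
      integral_nonneg_of_ae (hu.mono fun y hy => mul_nonneg (hJnn x y) hy)
    have h2 : 0 ≤ (C - h x) * u x :=
      mul_nonneg (by have := (abs_le.mp (hC x)).2; linarith) hux
    simp only [Pi.add_apply, Pi.sub_apply, Pi.smul_apply, smul_eq_mul, Pi.zero_apply] at e1 e2 e3 hux ⊢
    rw [e1, e2, e3, e4, e5]
    nlinarith
  -- powers preserve nonnegativity
  have hpow : ∀ n : ℕ, (0 : Ω → ℝ) ≤ᵐ[μ] ((A ^ n) u₀ : Ω → ℝ) := by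
    intro n
    induction n with
    | zero => simpa using hu₀
    | succ n ih =>
      rw [pow_succ']
      rw [ContinuousLinearMap.mul_apply]
      exact hApos _ ih
  -- split the exponential
  have hcomm : Commute ((-(t * C)) • (1 : Lp ℝ p μ →L[ℝ] Lp ℝ p μ)) (t • A) := by
    ext u
    simp only [ContinuousLinearMap.mul_apply, ContinuousLinearMap.smul_apply,
      ContinuousLinearMap.one_apply, ContinuousLinearMap.map_smul]
    rw [smul_comm]
  have h1 : t • (K - M) = (-(t * C)) • (1 : Lp ℝ p μ →L[ℝ] Lp ℝ p μ) + t • A := by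
    rw [hA]; module
  have hexp1 : NormedSpace.exp ((-(t * C)) • (1 : Lp ℝ p μ →L[ℝ] Lp ℝ p μ))
      = algebraMap ℝ (Lp ℝ p μ →L[ℝ] Lp ℝ p μ) (Real.exp (-(t * C))) := by
    rw [← Algebra.algebraMap_eq_smul_one, ← NormedSpace.algebraMap_exp_comm,
      ← Real.exp_eq_exp_ℝ]
  have hsplit : NormedSpace.exp (t • (K - M))
      = Real.exp (-(t * C)) • NormedSpace.exp (t • A) := by
    rw [h1, NormedSpace.exp_add_of_commute_of_mem_ball (𝕂 := ℝ) hcomm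
      ((NormedSpace.expSeries_radius_eq_top ℝ (Lp ℝ p μ →L[ℝ] Lp ℝ p μ)).symm ▸ edist_lt_top _ _)
      ((NormedSpace.expSeries_radius_eq_top ℝ (Lp ℝ p μ →L[ℝ] Lp ℝ p μ)).symm ▸ edist_lt_top _ _), hexp1,
      ← Algebra.smul_def (Real.exp (-(t * C))) (NormedSpace.exp (t • A))]
  -- exp(t•A) u₀ is nonnegative, via the power series
  have hsum : Summable fun n : ℕ => ((Nat.factorial n : ℝ)⁻¹) • (t • A) ^ n :=
    NormedSpace.expSeries_summable' (𝕂 := ℝ) (t • A)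
  have happly : NormedSpace.exp (t • A) u₀
      = ∑' n : ℕ, ((Nat.factorial n : ℝ)⁻¹) • (((t • A) ^ n) u₀) := by
    rw [NormedSpace.exp_eq_tsum ℝ]
    exact ((ContinuousLinearMap.apply ℝ (Lp ℝ p μ) u₀).map_tsum hsum).trans (by
      simp [ContinuousLinearMap.apply_apply])
  have hterm : ∀ n : ℕ, (0 : Lp ℝ p μ) ≤ ((Nat.factorial n : ℝ)⁻¹) • (((t • A) ^ n) u₀) := by
    intro n
    rw [← Lp.coeFn_nonneg]
    have hc : (0 : ℝ) ≤ (Nat.factorial n : ℝ)⁻¹ * t ^ n := by positivity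
    have hx : ((t • A) ^ n) u₀ = t ^ n • ((A ^ n) u₀) := by
      rw [smul_pow, ContinuousLinearMap.smul_apply]
    filter_upwards [Lp.coeFn_smul ((Nat.factorial n : ℝ)⁻¹) (((t • A) ^ n) u₀),
      Lp.coeFn_smul ((t : ℝ) ^ n) ((A ^ n) u₀), hpow n] with x e1 e2 hxnn
    have : ((((t • A) ^ n) u₀ : Lp ℝ p μ) : Ω → ℝ) x = t ^ n * ((A ^ n) u₀ : Ω → ℝ) x := by
      rw [hx]; simpa using e2
    simp only [Pi.smul_apply, smul_eq_mul] at e1 ⊢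
    rw [e1, this]
    exact mul_nonneg (by positivity) (mul_nonneg (by positivity) hxnn)
  have hexpA : (0 : Ω → ℝ) ≤ᵐ[μ] (NormedSpace.exp (t • A) u₀ : Ω → ℝ) := by
    rw [Lp.coeFn_nonneg, happly]
    exact tsum_nonneg hterm
  rw [hsplit, ContinuousLinearMap.smul_apply]
  filter_upwards [Lp.coeFn_smul (Real.exp (-(t * C))) (NormedSpace.exp (t • A) u₀),
    hexpA] with x e1 h2
  simp only [Pi.smul_apply, smul_eq_mul] at e1 ⊢
  rw [e1]
  exact mul_nonneg (Real.exp_nonneg _) h2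
end

section
/- (Asymptotic smoothing) Let μ(Ω) < ∞, 1 ≤ p ≤ q ≤ ∞, X = L^q(Ω) or C_b(Ω), and let K_J : L^p(Ω) → X be compact. Assume h(x) ≥ α > 0 for all x ∈ Ω. Then the group S(t) = e^{(K_J − hI)t} on L^p(Ω) decomposes as S(t) = S₁(t) + S₂(t), where S₁(t)u₀ = e^{−h(·)t}u₀ satisfies ‖S₁(t)‖_{L(L^p)} ≤ e^{−αt} → 0 exponentially as t → ∞, and S₂(t) : L^p(Ω) → X is compact for every t > 0. -/
open MeasureTheory ENNReal Filter
open Topology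

lemma stmt18_abs_exp_sub_exp_le (a b : ℝ) :
    |Real.exp a - Real.exp b| ≤ (Real.exp a + Real.exp b) * |a - b| := by
  wlog hab : b ≤ a with H
  · have h := H b a (le_of_not_ge hab)
    rw [abs_sub_comm, abs_sub_comm b a] at h
    linarith [h]
  have h1 := Real.add_one_le_exp (b - a)
  have h2 : Real.exp b = Real.exp (b - a) * Real.exp a := by
    rw [← Real.exp_add]; ring_nf
  have pa := Real.exp_pos a
  have pb := Real.exp_pos b
  rw [abs_of_nonneg (sub_nonneg.2 (Real.exp_le_exp.2 hab)), abs_of_nonneg (sub_nonneg.2 hab)]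
  nlinarith

section MulCLM

variable {Ω : Type*} [MeasurableSpace Ω] (μ : Measure Ω) (r : ℝ≥0∞) [Fact (1 ≤ r)]

lemma stmt18_memLp_mul {g : Ω → ℝ} (hg : Measurable g) {C : ℝ} (hC : ∀ x, |g x| ≤ C)
    (u : Lp ℝ r μ) : MemLp (fun x => g x * u x) r μ :=
  MemLp.of_le_mul (Lp.memLp u)
    (hg.aestronglyMeasurable.mul (Lp.aestronglyMeasurable u))
    (Eventually.of_forall fun x => by
      simp only [Real.norm_eq_abs, abs_mul]
      exact mul_le_mul_of_nonneg_right (hC x) (abs_nonneg _))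

/-- Multiplication by a bounded measurable function on `Lp`. -/
noncomputable def stmt18_mulCLM {g : Ω → ℝ} (hg : Measurable g) {C : ℝ} (hC : ∀ x, |g x| ≤ C) :
    Lp ℝ r μ →L[ℝ] Lp ℝ r μ :=
  LinearMap.mkContinuous
    { toFun := fun u => (stmt18_memLp_mul μ r hg hC u).toLp _
      map_add' := fun u v => by
        apply Lp.ext
        filter_upwards [MemLp.coeFn_toLp (stmt18_memLp_mul μ r hg hC (u + v)),
          MemLp.coeFn_toLp (stmt18_memLp_mul μ r hg hC u),
          MemLp.coeFn_toLp (stmt18_memLp_mul μ r hg hC v),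
          Lp.coeFn_add u v,
          Lp.coeFn_add ((stmt18_memLp_mul μ r hg hC u).toLp _)
            ((stmt18_memLp_mul μ r hg hC v).toLp _)] with x h1 h2 h3 h4 h5
        rw [h1, h5]
        simp only [Pi.add_apply] at *
        rw [h2, h3, h4]
        simp [Pi.add_apply, mul_add]
      map_smul' := fun c u => by
        simp only [RingHom.id_apply]
        apply Lp.ext
        filter_upwards [MemLp.coeFn_toLp (stmt18_memLp_mul μ r hg hC (c • u)),
          MemLp.coeFn_toLp (stmt18_memLp_mul μ r hg hC u),
          Lp.coeFn_smul c u,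
          Lp.coeFn_smul c ((stmt18_memLp_mul μ r hg hC u).toLp _)] with x h1 h2 h3 h4
        rw [h1, h4]
        simp only [Pi.smul_apply, smul_eq_mul] at *
        rw [h2, h3]
        ring }
    (max C 0)
    (fun u => by
      simp only [LinearMap.coe_mk, AddHom.coe_mk]
      rw [Lp.norm_toLp (fun x => g x * u x) (stmt18_memLp_mul μ r hg hC u)]
      have h1 : eLpNorm (fun x => g x * u x) r μ ≤
          eLpNorm (fun x => (max C 0) * u x) r μ := by
        apply eLpNorm_mono
        intro x
        simp only [Real.norm_eq_abs, abs_mul]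
        apply mul_le_mul_of_nonneg_right _ (abs_nonneg _)
        exact (hC x).trans ((le_max_left _ _).trans (le_abs_self _))
      have h2 : eLpNorm (fun x => (max C 0) * u x) r μ
          = ‖max C 0‖₊ * eLpNorm u r μ := by
        exact eLpNorm_const_smul (max C 0) (⇑u) r μ
      calc (eLpNorm (fun x => g x * u x) r μ).toReal
          ≤ ((‖max C 0‖₊ : ℝ≥0∞) * eLpNorm u r μ).toReal := by
            apply ENNReal.toReal_mono _ (h1.trans h2.le)
            exact ENNReal.mul_ne_top ENNReal.coe_ne_top (Lp.eLpNorm_ne_top u)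
        _ = max C 0 * ‖u‖ := by
            rw [ENNReal.toReal_mul, Lp.norm_def]
            congr 1
            simp [abs_of_nonneg (le_max_right C 0)]
            )

lemma stmt18_mulCLM_coeFn {g : Ω → ℝ} (hg : Measurable g) {C : ℝ} (hC : ∀ x, |g x| ≤ C)
    (u : Lp ℝ r μ) :
    (stmt18_mulCLM μ r hg hC u : Ω → ℝ) =ᵐ[μ] fun x => g x * u x :=
  MemLp.coeFn_toLp (stmt18_memLp_mul μ r hg hC u)

lemma stmt18_mulCLM_norm_le {g : Ω → ℝ} (hg : Measurable g) {C : ℝ} (hC : ∀ x, |g x| ≤ C) :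
    ‖stmt18_mulCLM μ r hg hC‖ ≤ max C 0 :=
  LinearMap.mkContinuous_norm_le _ (le_max_right C 0) _

end MulCLM

section Incl

variable {Ω : Type*} [MeasurableSpace Ω] (μ : Measure Ω) [IsFiniteMeasure μ]
variable (p q : ℝ≥0∞) [Fact (1 ≤ p)] [Fact (1 ≤ q)]

lemma stmt18_exponent_nonneg (hpq : p ≤ q) : 0 ≤ 1 / p.toReal - 1 / q.toReal := by
  by_cases hq : q = ∞
  · simp [hq]
  · have hp : p ≠ ∞ := fun hp => hq (top_le_iff.1 (hp ▸ hpq))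
    have hp0 : p ≠ 0 := by
      have := (Fact.out : (1:ℝ≥0∞) ≤ p)
      intro h0; rw [h0] at this; simp at this
    have h1 : 0 < p.toReal := ENNReal.toReal_pos hp0 hp
    have h2 : p.toReal ≤ q.toReal := ENNReal.toReal_mono hq hpq
    have := one_div_le_one_div_of_le h1 h2
    linarith

/-- The continuous inclusion `L^q ↪ L^p` for a finite measure and `p ≤ q`. -/
noncomputable def stmt18_incl (hpq : p ≤ q) : Lp ℝ q μ →L[ℝ] Lp ℝ p μ :=
  LinearMap.mkContinuous
    { toFun := fun u => ((Lp.memLp u).mono_exponent hpq).toLp _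
      map_add' := fun u v => by
        apply Lp.ext
        filter_upwards [MemLp.coeFn_toLp ((Lp.memLp (u + v)).mono_exponent hpq),
          MemLp.coeFn_toLp ((Lp.memLp u).mono_exponent hpq),
          MemLp.coeFn_toLp ((Lp.memLp v).mono_exponent hpq),
          Lp.coeFn_add u v,
          Lp.coeFn_add (((Lp.memLp u).mono_exponent hpq).toLp _)
            (((Lp.memLp v).mono_exponent hpq).toLp _)] with x h1 h2 h3 h4 h5
        rw [h1, h5]
        simp only [Pi.add_apply] at *
        rw [h2, h3, h4]
      map_smul' := fun c u => by
        simp only [RingHom.id_apply]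
        apply Lp.ext
        filter_upwards [MemLp.coeFn_toLp ((Lp.memLp (c • u)).mono_exponent hpq),
          MemLp.coeFn_toLp ((Lp.memLp u).mono_exponent hpq),
          Lp.coeFn_smul c u,
          Lp.coeFn_smul c (((Lp.memLp u).mono_exponent hpq).toLp _)] with x h1 h2 h3 h4
        rw [h1, h4]
        simp only [Pi.smul_apply, smul_eq_mul] at *
        rw [h2, h3] }
    ((μ Set.univ ^ (1 / p.toReal - 1 / q.toReal)).toReal)
    (fun u => by
      simp only [LinearMap.coe_mk, AddHom.coe_mk]
      rw [Lp.norm_toLp _ ((Lp.memLp u).mono_exponent hpq)]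
      have hkey := eLpNorm_le_eLpNorm_mul_rpow_measure_univ hpq (Lp.aestronglyMeasurable u)
      have hfin : μ Set.univ ^ (1 / p.toReal - 1 / q.toReal) ≠ ∞ :=
        ENNReal.rpow_ne_top_of_nonneg (stmt18_exponent_nonneg p q hpq) (measure_ne_top μ _)
      calc (eLpNorm (⇑u) p μ).toReal
          ≤ (eLpNorm (⇑u) q μ * μ Set.univ ^ (1 / p.toReal - 1 / q.toReal)).toReal :=
            ENNReal.toReal_mono (ENNReal.mul_ne_top (Lp.eLpNorm_ne_top u) hfin) hkey
        _ = (μ Set.univ ^ (1 / p.toReal - 1 / q.toReal)).toReal * ‖u‖ := by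
            rw [ENNReal.toReal_mul, Lp.norm_def]; ring)

lemma stmt18_incl_coeFn (hpq : p ≤ q) (u : Lp ℝ q μ) :
    (stmt18_incl μ p q hpq u : Ω → ℝ) =ᵐ[μ] (u : Ω → ℝ) :=
  MemLp.coeFn_toLp ((Lp.memLp u).mono_exponent hpq)

end Incl

section ExpAction

variable {Ω : Type*} [MeasurableSpace Ω] {μ : Measure Ω} {p : ℝ≥0∞} [Fact (1 ≤ p)]

lemma stmt18_exp_smul_apply_ae (M : Lp ℝ p μ →L[ℝ] Lp ℝ p μ) (h : Ω → ℝ)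
    (hM : ∀ u : Lp ℝ p μ, (M u : Ω → ℝ) =ᵐ[μ] fun x => h x * u x) (r : ℝ) (u : Lp ℝ p μ) :
    (NormedSpace.exp (r • M) u : Ω → ℝ) =ᵐ[μ] fun x => Real.exp (r * h x) * u x := by
  -- powers act as multiplication by `(r*h)^n`
  have key : ∀ n : ℕ, (((r • M) ^ n) u : Ω → ℝ) =ᵐ[μ] fun x => (r * h x) ^ n * u x := by
    intro n
    induction n with
    | zero =>
      simp only [pow_zero, ContinuousLinearMap.one_apply]
      filter_upwards with x
      simp
    | succ n ih =>
      have h1 : ((r • M) ^ (n + 1)) u = r • (M (((r • M) ^ n) u)) := by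
        rw [pow_succ']; rfl
      rw [h1]
      filter_upwards [Lp.coeFn_smul r (M (((r • M) ^ n) u)), hM (((r • M) ^ n) u), ih]
        with x h2 h3 h4
      simp only [Pi.smul_apply, smul_eq_mul] at h2
      rw [h2, h3, h4, pow_succ]
      ring
  -- the exponential series applied to `u`
  have hsum : HasSum (fun n : ℕ => (n.factorial⁻¹ : ℝ) • (((r • M) ^ n) u))
      (NormedSpace.exp (r • M) u) := by
    have h0 : HasSum (fun n : ℕ => (n.factorial⁻¹ : ℝ) • (r • M) ^ n)
        (NormedSpace.exp (r • M)) := by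
      rw [NormedSpace.exp_eq_tsum ℝ]
      exact (NormedSpace.expSeries_summable' (𝕂 := ℝ) (r • M)).hasSum
    have h1 := h0.mapL (ContinuousLinearMap.apply ℝ (Lp ℝ p μ) u)
    simpa using h1
  have htendsto := hsum.tendsto_sum_nat
  set Sn : ℕ → Lp ℝ p μ :=
    fun n => ∑ k ∈ Finset.range n, (k.factorial⁻¹ : ℝ) • (((r • M) ^ k) u) with hSndef
  set L : Lp ℝ p μ := NormedSpace.exp (r • M) u with hLdef
  have hmeas : TendstoInMeasure μ (fun n => (Sn n : Ω → ℝ)) atTop (L : Ω → ℝ) :=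
    tendstoInMeasure_of_tendsto_Lp htendsto
  obtain ⟨ns, hns, hae⟩ := hmeas.exists_seq_tendsto_ae
  have hSn : ∀ n, (Sn n : Ω → ℝ) =ᵐ[μ]
      fun x => (∑ k ∈ Finset.range n, (k.factorial⁻¹ : ℝ) * (r * h x) ^ k) * u x := by
    intro n
    induction n with
    | zero =>
      simp only [hSndef, Finset.range_zero, Finset.sum_empty]
      filter_upwards [Lp.coeFn_zero ℝ p μ] with x hx
      simpa using hx
    | succ n ih =>
      have hsucc : Sn (n + 1) = Sn n + (n.factorial⁻¹ : ℝ) • (((r • M) ^ n) u) := by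
        simp [hSndef, Finset.sum_range_succ]
      rw [hsucc]
      filter_upwards [Lp.coeFn_add (Sn n) ((n.factorial⁻¹ : ℝ) • (((r • M) ^ n) u)),
        Lp.coeFn_smul (n.factorial⁻¹ : ℝ) (((r • M) ^ n) u), key n, ih] with x h1 h2 h3 h4
      rw [h1]
      simp only [Pi.add_apply, Pi.smul_apply, smul_eq_mul] at *
      rw [h2, h3, h4, Finset.sum_range_succ]
      ring
  have hall : ∀ᵐ x ∂μ, ∀ n, (Sn n : Ω → ℝ) x =
      (∑ k ∈ Finset.range n, (k.factorial⁻¹ : ℝ) * (r * h x) ^ k) * u x := ae_all_iff.2 hSn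
  have hptwise : ∀ x : Ω, Tendsto
      (fun n => (∑ k ∈ Finset.range n, (k.factorial⁻¹ : ℝ) * (r * h x) ^ k) * u x)
      atTop (𝓝 (Real.exp (r * h x) * u x)) := by
    intro x
    have h0 : HasSum (fun k : ℕ => (k.factorial⁻¹ : ℝ) • (r * h x) ^ k)
        (NormedSpace.exp (r * h x)) := by
      rw [NormedSpace.exp_eq_tsum ℝ]
      exact (NormedSpace.expSeries_summable' (𝕂 := ℝ) (r * h x)).hasSum
    have h1 := h0.tendsto_sum_nat.mul_const (u x)
    rw [Real.exp_eq_exp_ℝ]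
    simpa [smul_eq_mul] using h1
  filter_upwards [hae, hall] with x hx1 hx2
  have h5 : Tendsto
      (fun i => (∑ k ∈ Finset.range (ns i), (k.factorial⁻¹ : ℝ) * (r * h x) ^ k) * u x)
      atTop (𝓝 (Real.exp (r * h x) * u x)) := (hptwise x).comp hns.tendsto_atTop
  have h6 : Tendsto
      (fun i => (∑ k ∈ Finset.range (ns i), (k.factorial⁻¹ : ℝ) * (r * h x) ^ k) * u x)
      atTop (𝓝 ((L : Ω → ℝ) x)) := hx1.congr (fun i => hx2 (ns i))
  exact tendsto_nhds_unique h6 h5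

end ExpAction

set_option maxHeartbeats 2000000
set_option synthInstance.maxHeartbeats 1000000
set_option maxHeartbeats 2000000 in
/-- Asymptotic smoothing: let `μ(Ω) < ∞`, `1 ≤ p ≤ q ≤ ∞`, `K_J : L^p(Ω) → L^q(Ω)`
compact, and `h(x) ≥ α > 0`.  Then the group `S(t) = e^{(K_J − hI)t}` on `L^p(Ω)`
decomposes as `S(t) = S₁(t) + S₂(t)` with `S₁(t)u₀ = e^{−h·t}u₀`,
`‖S₁(t)‖ ≤ e^{−αt}`, and `S₂(t) : L^p(Ω) → L^q(Ω)` compact for every `t > 0`. -/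
theorem stmt18 {Ω : Type*} [MeasurableSpace Ω] (μ : Measure Ω) [IsFiniteMeasure μ]
    (p q : ℝ≥0∞) [Fact (1 ≤ p)] [Fact (1 ≤ q)] (hpq : p ≤ q)
    (Kq : Lp ℝ p μ →L[ℝ] Lp ℝ q μ) (hKq : IsCompactOperator Kq)
    (K : Lp ℝ p μ →L[ℝ] Lp ℝ p μ)
    (hconsist : ∀ u : Lp ℝ p μ, (K u : Ω → ℝ) =ᵐ[μ] (Kq u : Ω → ℝ))
    (α : ℝ) (hα : 0 < α)
    (h : Ω → ℝ) (hmeas : Measurable h) (hge : ∀ x, α ≤ h x)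
    (hbdd : ∃ C : ℝ, ∀ x, |h x| ≤ C)
    (M : Lp ℝ p μ →L[ℝ] Lp ℝ p μ)
    (hM : ∀ u : Lp ℝ p μ, (M u : Ω → ℝ) =ᵐ[μ] fun x => h x * u x) :
    ∀ t : ℝ, 0 < t → ∃ S₁ S₂ : Lp ℝ p μ →L[ℝ] Lp ℝ p μ,
      NormedSpace.exp (t • (K - M)) = S₁ + S₂ ∧
      (∀ u₀ : Lp ℝ p μ, (S₁ u₀ : Ω → ℝ) =ᵐ[μ] fun x => Real.exp (-h x * t) * u₀ x) ∧
      ‖S₁‖ ≤ Real.exp (-α * t) ∧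
      ∃ S₂' : Lp ℝ p μ →L[ℝ] Lp ℝ q μ, IsCompactOperator S₂' ∧
        ∀ u₀ : Lp ℝ p μ, (S₂ u₀ : Ω → ℝ) =ᵐ[μ] (S₂' u₀ : Ω → ℝ) := by
  intro t ht
  obtain ⟨C₀, hC₀⟩ := hbdd
  set C' : ℝ := max C₀ 0 with hC'def
  have hC' : ∀ x, |h x| ≤ C' := fun x => (hC₀ x).trans (le_max_left _ _)
  set A : Lp ℝ p μ →L[ℝ] Lp ℝ p μ := K - M with hAdef
  set Φ : ℝ → (Lp ℝ p μ →L[ℝ] Lp ℝ p μ) :=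
    fun s => NormedSpace.exp ((s - t) • M) * NormedSpace.exp (s • A) with hΦdef
  set F : ℝ → (Lp ℝ p μ →L[ℝ] Lp ℝ p μ) :=
    fun s => NormedSpace.exp ((s - t) • M) * (K * NormedSpace.exp (s • A)) with hFdef
  -- Duhamel: derivative computation
  have hΦderiv : ∀ s : ℝ, HasDerivAt Φ (F s) s := by
    intro s
    have h1 : HasDerivAt (fun s : ℝ => NormedSpace.exp ((s - t) • M))
        (NormedSpace.exp ((s - t) • M) * M) s := by
      have he := hasDerivAt_exp_smul_const (𝕂 := ℝ) M (s - t)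
      have hsub : HasDerivAt (fun s : ℝ => s - t) 1 s := (hasDerivAt_id s).sub_const t
      have h2 := he.scomp s hsub
      rw [one_smul] at h2
      exact h2
    have h2 : HasDerivAt (fun s : ℝ => NormedSpace.exp (s • A))
        (A * NormedSpace.exp (s • A)) s := hasDerivAt_exp_smul_const' (𝕂 := ℝ) A s
    have h3 := h1.mul h2
    have h4 : NormedSpace.exp ((s - t) • M) * M * NormedSpace.exp (s • A)
        + NormedSpace.exp ((s - t) • M) * (A * NormedSpace.exp (s • A)) = F s := by
      rw [hFdef]
      simp only
      rw [mul_assoc, ← mul_add, ← add_mul]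
      congr 2
      rw [hAdef]; abel
    rw [hΦdef, ← h4]
    exact h3
  -- continuity facts
  have hexpcont : Continuous (NormedSpace.exp :
      (Lp ℝ p μ →L[ℝ] Lp ℝ p μ) → (Lp ℝ p μ →L[ℝ] Lp ℝ p μ)) :=
    continuous_iff_continuousAt.2 fun x => (NormedSpace.exp_analytic (𝕂 := ℝ) x).continuousAt
  have hE1 : Continuous fun s : ℝ => NormedSpace.exp ((s - t) • M) :=
    hexpcont.comp ((continuous_id.sub continuous_const).smul continuous_const)
  have hE2 : Continuous fun s : ℝ => NormedSpace.exp (s • A) :=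
    hexpcont.comp (continuous_id.smul continuous_const)
  have hFcont : Continuous F := by
    rw [hFdef]; exact hE1.mul (continuous_const.mul hE2)
  have hFint : IntervalIntegrable F MeasureTheory.volume 0 t := hFcont.intervalIntegrable 0 t
  have hFTC : (∫ s in (0:ℝ)..t, F s) = Φ t - Φ 0 :=
    intervalIntegral.integral_eq_sub_of_hasDerivAt (fun s _ => hΦderiv s) hFint
  have hΦt : Φ t = NormedSpace.exp (t • A) := by
    rw [hΦdef]; simp [NormedSpace.exp_zero]
  have hΦ0 : Φ 0 = NormedSpace.exp ((-t) • M) := by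
    rw [hΦdef]; simp [NormedSpace.exp_zero, zero_sub]
  refine ⟨NormedSpace.exp ((-t) • M), ∫ s in (0:ℝ)..t, F s, ?_, ?_, ?_, ?_⟩
  · rw [hFTC, hΦt, hΦ0]; abel
  · intro u₀
    refine (stmt18_exp_smul_apply_ae M h hM (-t) u₀).trans (Eventually.of_forall fun x => ?_)
    show Real.exp (-t * h x) * u₀ x = Real.exp (-h x * t) * u₀ x
    rw [show -t * h x = -h x * t by ring]
  · apply ContinuousLinearMap.opNorm_le_bound _ (Real.exp_nonneg _)
    intro u
    have hcoe := stmt18_exp_smul_apply_ae M h hM (-t) u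
    rw [Lp.norm_def, eLpNorm_congr_ae hcoe]
    have h1 : eLpNorm (fun x => Real.exp (-t * h x) * u x) p μ ≤
        eLpNorm (fun x => Real.exp (-α * t) * u x) p μ := by
      apply eLpNorm_mono
      intro x
      simp only [Real.norm_eq_abs, abs_mul, Real.abs_exp]
      apply mul_le_mul_of_nonneg_right _ (abs_nonneg _)
      apply Real.exp_le_exp.2
      nlinarith [hge x]
    have h2 : eLpNorm (fun x => Real.exp (-α * t) * u x) p μ
        = ‖Real.exp (-α * t)‖₊ * eLpNorm u p μ := by
      exact eLpNorm_const_smul (Real.exp (-α * t)) (⇑u) p μ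
    calc (eLpNorm (fun x => Real.exp (-t * h x) * u x) p μ).toReal
        ≤ ((‖Real.exp (-α * t)‖₊ : ℝ≥0∞) * eLpNorm u p μ).toReal :=
          ENNReal.toReal_mono
            (ENNReal.mul_ne_top ENNReal.coe_ne_top (Lp.eLpNorm_ne_top u)) (h1.trans h2.le)
      _ = Real.exp (-α * t) * ‖u‖ := by
          rw [ENNReal.toReal_mul, Lp.norm_def]
          congr 1
          simp [Real.abs_exp]
  -- the compact part
  · have hgmeas : ∀ r : ℝ, Measurable fun x => Real.exp (-(r * h x)) := fun r =>
      Real.measurable_exp.comp (hmeas.const_mul r).neg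
    have hgbd : ∀ r : ℝ, ∀ x, |Real.exp (-(r * h x))| ≤ Real.exp (C' * |r|) := by
      intro r x
      rw [Real.abs_exp]
      apply Real.exp_le_exp.2
      calc -(r * h x) ≤ |r * h x| := neg_le_abs _
        _ = |r| * |h x| := abs_mul _ _
        _ ≤ |r| * C' := mul_le_mul_of_nonneg_left (hC' x) (abs_nonneg r)
        _ = C' * |r| := mul_comm _ _
    set mQ : ℝ → (Lp ℝ q μ →L[ℝ] Lp ℝ q μ) :=
      fun r => stmt18_mulCLM μ q (hgmeas r) (hgbd r) with hmQdef
    set G : ℝ → (Lp ℝ p μ →L[ℝ] Lp ℝ q μ) :=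
      fun s => (mQ (t - s)).comp (Kq.comp (NormedSpace.exp (s • A))) with hGdef
    -- operator norm bound for differences of multiplication operators
    have hmQsub : ∀ r r' : ℝ, ‖mQ r - mQ r'‖ ≤
        max ((Real.exp (C' * |r|) + Real.exp (C' * |r'|)) * (C' * |r - r'|)) 0 := by
      intro r r'
      have hd : ∀ x, |Real.exp (-(r * h x)) - Real.exp (-(r' * h x))| ≤
          (Real.exp (C' * |r|) + Real.exp (C' * |r'|)) * (C' * |r - r'|) := by
        intro x
        have h1 := stmt18_abs_exp_sub_exp_le (-(r * h x)) (-(r' * h x))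
        have h2 : |(-(r * h x)) - (-(r' * h x))| = |h x| * |r - r'| := by
          rw [show (-(r * h x)) - (-(r' * h x)) = h x * (r' - r) by ring, abs_mul,
            abs_sub_comm r' r]
        refine h1.trans ?_
        rw [h2]
        have e1 : Real.exp (-(r * h x)) ≤ Real.exp (C' * |r|) := by
          have := hgbd r x; rwa [Real.abs_exp] at this
        have e2 : Real.exp (-(r' * h x)) ≤ Real.exp (C' * |r'|) := by
          have := hgbd r' x; rwa [Real.abs_exp] at this
        have e3 : |h x| * |r - r'| ≤ C' * |r - r'| :=
          mul_le_mul_of_nonneg_right (hC' x) (abs_nonneg _)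
        apply mul_le_mul (add_le_add e1 e2) e3 (by positivity) (by positivity)
      have heq : mQ r - mQ r' = stmt18_mulCLM μ q ((hgmeas r).sub (hgmeas r')) hd := by
        refine ContinuousLinearMap.ext fun u => ?_
        apply Lp.ext
        filter_upwards [Lp.coeFn_sub (mQ r u) (mQ r' u),
          stmt18_mulCLM_coeFn μ q (hgmeas r) (hgbd r) u,
          stmt18_mulCLM_coeFn μ q (hgmeas r') (hgbd r') u,
          stmt18_mulCLM_coeFn μ q ((hgmeas r).sub (hgmeas r')) hd u] with x h1 h2 h3 h4
        rw [ContinuousLinearMap.sub_apply, h1, h4]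
        simp only [Pi.sub_apply]
        rw [h2, h3]
        ring
      rw [heq]
      exact stmt18_mulCLM_norm_le μ q _ _
    have hmQnorm : ∀ r : ℝ, ‖mQ r‖ ≤ max (Real.exp (C' * |r|)) 0 :=
      fun r => stmt18_mulCLM_norm_le μ q _ _
    -- continuity of G
    have hGcont : Continuous G := by
      rw [continuous_iff_continuousAt]
      intro s₀
      rw [ContinuousAt, tendsto_iff_norm_sub_tendsto_zero]
      set B : ℝ → ℝ := fun s =>
        max ((Real.exp (C' * |t - s|) + Real.exp (C' * |t - s₀|)) *
            (C' * |(t - s) - (t - s₀)|)) 0 * (‖Kq‖ * ‖NormedSpace.exp (s • A)‖)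
        + max (Real.exp (C' * |t - s₀|)) 0 *
            (‖Kq‖ * ‖NormedSpace.exp (s • A) - NormedSpace.exp (s₀ • A)‖) with hBdef
      have hb : ∀ s : ℝ, ‖G s - G s₀‖ ≤ B s := by
        intro s
        have hdecomp : G s - G s₀ =
            ((mQ (t - s)) - (mQ (t - s₀))).comp (Kq.comp (NormedSpace.exp (s • A)))
            + (mQ (t - s₀)).comp (Kq.comp
                (NormedSpace.exp (s • A) - NormedSpace.exp (s₀ • A))) := by
          refine ContinuousLinearMap.ext fun u => ?_
          simp only [hGdef, ContinuousLinearMap.sub_apply, ContinuousLinearMap.add_apply,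
            ContinuousLinearMap.comp_apply, map_sub]
          abel
        rw [hdecomp, hBdef]
        refine (norm_add_le _ _).trans (add_le_add ?_ ?_)
        · refine (ContinuousLinearMap.opNorm_comp_le _ _).trans ?_
          exact mul_le_mul (hmQsub _ _) (ContinuousLinearMap.opNorm_comp_le _ _)
            (norm_nonneg _) (le_max_right _ _)
        · refine (ContinuousLinearMap.opNorm_comp_le _ _).trans ?_
          exact mul_le_mul (hmQnorm _) (ContinuousLinearMap.opNorm_comp_le _ _)
            (norm_nonneg _) (le_max_right _ _)
      have hBcont : Continuous B := by
        rw [hBdef]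
        have c1 : Continuous fun s : ℝ => |t - s| :=
          (continuous_const.sub continuous_id).abs
        have c2 : Continuous fun s : ℝ => Real.exp (C' * |t - s|) :=
          Real.continuous_exp.comp (continuous_const.mul c1)
        have c3 : Continuous fun s : ℝ => |(t - s) - (t - s₀)| :=
          ((continuous_const.sub continuous_id).sub continuous_const).abs
        have c4 : Continuous fun s : ℝ => ‖NormedSpace.exp (s • A)‖ := hE2.norm
        have c5 : Continuous fun s : ℝ =>
            ‖NormedSpace.exp (s • A) - NormedSpace.exp (s₀ • A)‖ :=
          (hE2.sub continuous_const).norm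
        exact ((((c2.add continuous_const).mul (continuous_const.mul c3)).max
          continuous_const).mul (continuous_const.mul c4)).add
          (continuous_const.mul (continuous_const.mul c5))
      have hB0 : Tendsto B (𝓝 s₀) (𝓝 0) := by
        have := hBcont.tendsto s₀
        have hBv : B s₀ = 0 := by
          rw [hBdef]; simp
        rwa [hBv] at this
      exact squeeze_zero (fun s => norm_nonneg _) hb hB0
    -- each G s is compact
    have hGcomp : ∀ s : ℝ, IsCompactOperator ⇑(G s) := by
      intro s
      have h1 : IsCompactOperator (⇑Kq ∘ ⇑(NormedSpace.exp (s • A))) :=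
        hKq.comp_clm _
      exact h1.clm_comp (mQ (t - s))
    -- compactness of the integral operator
    set sset : Set (Lp ℝ p μ →L[ℝ] Lp ℝ q μ) := {T | IsCompactOperator ⇑T} with hssetdef
    have hconv : Convex ℝ sset := by
      intro T hT S hS a b _ _ _
      have h1 := (hT.smul a).add (hS.smul b)
      have hcoe : ⇑(a • T + b • S) = a • ⇑T + b • ⇑S := by
        funext x; simp
      show IsCompactOperator ⇑(a • T + b • S)
      rw [hcoe]
      exact h1
    have hclosed : IsClosed sset := isClosed_setOf_isCompactOperator
    set ν : Measure ℝ := (ENNReal.ofReal t)⁻¹ • (MeasureTheory.volume.restrict (Set.Ioc 0 t))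
      with hνdef
    have ht0 : ENNReal.ofReal t ≠ 0 := by
      simp only [ne_eq, ENNReal.ofReal_eq_zero, not_le]; exact ht
    haveI hprob : IsProbabilityMeasure ν := by
      constructor
      rw [hνdef]
      simp only [Measure.smul_apply, Measure.restrict_apply MeasurableSet.univ,
        Set.univ_inter, Real.volume_Ioc, smul_eq_mul, sub_zero]
      exact ENNReal.inv_mul_cancel ht0 ENNReal.ofReal_ne_top
    have hGRint : IntegrableOn G (Set.Ioc 0 t) MeasureTheory.volume :=
      hGcont.integrableOn_Ioc
    have hGνint : Integrable G ν := by
      rw [hνdef]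
      exact Integrable.smul_measure (ε := Lp ℝ p μ →L[ℝ] Lp ℝ q μ) hGRint.integrable (ENNReal.inv_ne_top.2 ht0)
    have hmem : (∫ s, G s ∂ν) ∈ sset :=
      hconv.integral_mem hclosed (Eventually.of_forall fun s => hGcomp s) hGνint
    have hI : (∫ s in (0:ℝ)..t, G s) = t • (∫ s, G s ∂ν) := by
      rw [intervalIntegral.integral_of_le ht.le, hνdef, integral_smul_measure,
        ENNReal.toReal_inv, ENNReal.toReal_ofReal ht.le, smul_smul,
        mul_inv_cancel₀ ht.ne', one_smul]
    refine ⟨∫ s in (0:ℝ)..t, G s, ?_, ?_⟩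
    · rw [hI]
      have h1 := hmem.smul t
      have hcoe : ⇑(t • (∫ s, G s ∂ν)) = t • ⇑(∫ s, G s ∂ν) := by funext x; simp
      show IsCompactOperator ⇑(t • (∫ s, G s ∂ν))
      rw [hcoe]
      exact h1
    · intro u₀
      have hGint : IntervalIntegrable G MeasureTheory.volume 0 t :=
        hGcont.intervalIntegrable 0 t
      have hGuint : IntervalIntegrable (fun s => G s u₀) MeasureTheory.volume 0 t :=
        ((ContinuousLinearMap.apply ℝ (Lp ℝ q μ) u₀).continuous.comp hGcont).intervalIntegrable 0 t
      set ι := stmt18_incl μ p q hpq with hιdef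
      have hpoint : ∀ s : ℝ, ι (G s u₀) = F s u₀ := by
        intro s
        apply Lp.ext
        set w := NormedSpace.exp (s • A) u₀ with hwdef
        have e1 := stmt18_incl_coeFn μ p q hpq (G s u₀)
        have e2 : (G s u₀ : Ω → ℝ) =ᵐ[μ]
            fun x => Real.exp (-((t - s) * h x)) * (Kq w) x := by
          have hGs : G s u₀ = mQ (t - s) (Kq w) := rfl
          rw [hGs]
          exact stmt18_mulCLM_coeFn μ q (hgmeas (t - s)) (hgbd (t - s)) (Kq w)
        have e3 : F s u₀ = NormedSpace.exp ((s - t) • M) (K w) := rfl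
        have e4 := stmt18_exp_smul_apply_ae M h hM (s - t) (K w)
        have e5 := hconsist w
        have e6 : (F s u₀ : Ω → ℝ) =ᵐ[μ]
            fun x => Real.exp (-((t - s) * h x)) * (Kq w) x := by
          rw [e3]
          filter_upwards [e4, e5] with x h4 h5
          rw [h4, h5, show (s - t) * h x = -((t - s) * h x) by ring]
        exact e1.trans (e2.trans e6.symm)
      have hS₂u : (∫ s in (0:ℝ)..t, F s) u₀ = ι ((∫ s in (0:ℝ)..t, G s) u₀) := by
        rw [ContinuousLinearMap.intervalIntegral_apply hFint u₀,
          ContinuousLinearMap.intervalIntegral_apply hGint u₀,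
          ← ContinuousLinearMap.intervalIntegral_comp_comm ι hGuint]
        exact intervalIntegral.integral_congr (fun s _ => (hpoint s).symm)
      filter_upwards [stmt18_incl_coeFn μ p q hpq ((∫ s in (0:ℝ)..t, G s) u₀)] with x hx
      rw [hS₂u]
      exact hx
end
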